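/- Let 𝒪⁰ = {(u₀,u₁) ∈ ℋ^m : (u₀,u₁,0) ∈ Φ(Z_m^T)}. Then 𝒪⁰ is open in ℋ^m, the Cauchy problem □u + f(t,x,u,∇u,u̇)=0, (u,u̇)(0)=(u₀,u₁) has a solution in X_m^T if and only if (u₀,u₁) ∈ 𝒪⁰, and for each 0 ≤ t ≤ T the flow map S₀^t : 𝒪⁰ → ℋ^m, (u₀,u₁) ↦ (u(t), u̇(t)), is real-analytic. -/

import Mathlib

section Slice

variable {𝕜 : Type*} [NontriviallyNormedField 𝕜]
  {E F G : Type*} [NormedAddCommGroup E] [NormedSpace 𝕜 E]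
  [NormedAddCommGroup F] [NormedSpace 𝕜 F] [NormedAddCommGroup G] [NormedSpace 𝕜 G]

theorem AnalyticOnNhd.comp_prodMk_const {f : E × F → G} {s : Set (E × F)}
    (hf : AnalyticOnNhd 𝕜 f s) (c : F) :
    AnalyticOnNhd 𝕜 (fun x => f (x, c)) {x | (x, c) ∈ s} :=
  hf.comp₂ analyticOnNhd_id analyticOnNhd_const fun _ hx => hx

end Slice

theorem stmt12_general {Z H G : Type*}
    [NormedAddCommGroup Z] [NormedSpace ℝ Z]
    [NormedAddCommGroup H] [NormedSpace ℝ H]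
    [NormedAddCommGroup G] [NormedSpace ℝ G]
    (T : ℝ)
    (Φ : Z → H × G)
    (hOpen : IsOpen (Set.range Φ))
    (Ψ : H × G → Z)
    (hΨA : AnalyticOnNhd ℝ Ψ (Set.range Φ))
    (ev : ℝ → Z →L[ℝ] H) :
    IsOpen {p : H | (p, (0 : G)) ∈ Set.range Φ} ∧
    (∀ p : H, (∃ z : Z, Φ z = (p, 0)) ↔ p ∈ {p : H | (p, (0 : G)) ∈ Set.range Φ}) ∧
    ∀ t ∈ Set.Icc (0 : ℝ) T,
      AnalyticOnNhd ℝ (fun p : H => ev t (Ψ (p, 0)))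
        {p : H | (p, (0 : G)) ∈ Set.range Φ} := by
  refine ⟨hOpen.preimage (.prodMk_left 0), fun _ => Iff.rfl, fun t _ => ?_⟩
  exact ((ev t).analyticOnNhd Set.univ).comp (hΨA.comp_prodMk_const 0) (Set.mapsTo_univ _ _)

/-- analyticity of the flow maps `S₀^t`.
Here `H = ℋ^m`, `G = C([0,T];H^m)`, `Z = Z_m^T`, and `Φ : Z → H × G` is the analytic
diffeomorphism `u ↦ (u(0), u̇(0), □u + F(u))` of the Cauchy problem onto its open
image (Lemma 1.3), with analytic inverse `Ψ`; `ev t : Z →L H` is `u ↦ (u(t), u̇(t))`.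
A function `u ∈ Z` solves the Cauchy problem with data `p` iff `Φ u = (p, 0)`.
Then `𝒪⁰ = {p : (p,0) ∈ Φ(Z)}` is open in `ℋ^m`, the Cauchy problem with data `p`
has a solution iff `p ∈ 𝒪⁰`, and for every `t ∈ [0,T]` the flow map
`S₀^t : p ↦ ev t (Ψ (p,0))` is (real-)analytic on `𝒪⁰`. -/
theorem stmt12 {Z H G : Type*}
    [NormedAddCommGroup Z] [NormedSpace ℝ Z] [CompleteSpace Z]
    [NormedAddCommGroup H] [NormedSpace ℝ H] [CompleteSpace H]
    [NormedAddCommGroup G] [NormedSpace ℝ G] [CompleteSpace G]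
    (T : ℝ) (hT : 0 < T)
    (Φ : Z → H × G)
    (hA : AnalyticOnNhd ℝ Φ Set.univ)
    (hInj : Function.Injective Φ)
    (hOpen : IsOpen (Set.range Φ))
    (Ψ : H × G → Z)
    (hΨA : AnalyticOnNhd ℝ Ψ (Set.range Φ))
    (hΨ : ∀ z : Z, Ψ (Φ z) = z)
    (ev : ℝ → Z →L[ℝ] H) :
    IsOpen {p : H | (p, (0 : G)) ∈ Set.range Φ} ∧
    (∀ p : H, (∃ z : Z, Φ z = (p, 0)) ↔ p ∈ {p : H | (p, (0 : G)) ∈ Set.range Φ}) ∧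
    ∀ t ∈ Set.Icc (0 : ℝ) T,
      AnalyticOnNhd ℝ (fun p : H => ev t (Ψ (p, 0)))
        {p : H | (p, (0 : G)) ∈ Set.range Φ} :=
  stmt12_general T Φ hOpen Ψ hΨA ev
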